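/- Let ι be a finite nonempty index set and let p : ι → ℝ → ℝ² be trajectories each of which is 1-Lipschitz in time; write P(s) = {p(j)(s) : j ∈ ι}. Let r ≥ 0 and i ∈ ℤ, and suppose that at each of the times i and i+1 a diametral pair d₁(s), d₂(s) of P(s) with d₁(s) ≠ d₂(s) is chosen, labeled consistently so that ⟪d₂(i) − d₁(i), d₂(i+1) − d₁(i+1)⟫ ≥ 0, with v(s) a unit vector orthogonal to d₂(s) − d₁(s), E(s) the extent of P(s) in direction v(s), and canonical endpoints q'ⱼ(s) = dⱼ(s) + (c(s) − ⟪dⱼ(s), v(s)⟫)·v(s), where c(s) is the midpoint of [inf_{p∈P(s)} ⟪p, v(s)⟫, sup_{p∈P(s)} ⟪p, v(s)⟫]. Assume E(i) ≤ 2√2·r + 2 and E(i+1) ≤ 2√2·r + 2. Then dist(q'ⱼ(i), q'ⱼ(i+1)) ≤ (2r + 1)·√2 + 2 for j = 1, 2; consequently, the interpolated endpoints qⱼ(t) = (1 − (t − (i+1)))·q'ⱼ(i) + (t − (i+1))·q'ⱼ(i+1) move with speed at most (2r + 1)·√2 + 2 on [i+1, i+2]. -/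

import Mathlib

open scoped InnerProductSpace

/-- The extent of a finite point configuration `q : ι → ℝ²` in the direction of `v`. -/
noncomputable def configExtent {ι : Type*} [Fintype ι] [Nonempty ι]
    (q : ι → EuclideanSpace ℝ (Fin 2)) (v : EuclideanSpace ℝ (Fin 2)) : ℝ :=
  (Finset.univ.sup' Finset.univ_nonempty fun j => ⟪q j, v⟫_ℝ) -
    (Finset.univ.inf' Finset.univ_nonempty fun j => ⟪q j, v⟫_ℝ)

/-- The diameter of a finite point configuration. -/
noncomputable def configDiam {ι : Type*} [Fintype ι] [Nonempty ι]
    (q : ι → EuclideanSpace ℝ (Fin 2)) : ℝ :=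
  Finset.univ.sup' Finset.univ_nonempty fun jk : ι × ι => dist (q jk.1) (q jk.2)

/- ### Auxiliary lemmas -/

lemma speedBound.inner_coords (x y : EuclideanSpace ℝ (Fin 2)) :
    ⟪x, y⟫_ℝ = x 0 * y 0 + x 1 * y 1 := by
  simp [PiLp.inner_apply, RCLike.inner_apply, Fin.sum_univ_two]
  ring

lemma speedBound.norm_sq_coords (x : EuclideanSpace ℝ (Fin 2)) :
    ‖x‖ ^ 2 = x 0 ^ 2 + x 1 ^ 2 := by
  rw [← real_inner_self_eq_norm_sq, speedBound.inner_coords]; ring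

/-- An orthonormal pair in the Euclidean plane is a basis: every vector decomposes. -/
lemma speedBound.ortho_decomp (u v z : EuclideanSpace ℝ (Fin 2)) (hu : ‖u‖ = 1)
    (hv : ‖v‖ = 1) (huv : ⟪u, v⟫_ℝ = 0) : z = ⟪z, u⟫_ℝ • u + ⟪z, v⟫_ℝ • v := by
  have hu' : u 0 ^ 2 + u 1 ^ 2 = 1 := by rw [← speedBound.norm_sq_coords, hu]; norm_num
  have hv' : v 0 ^ 2 + v 1 ^ 2 = 1 := by rw [← speedBound.norm_sq_coords, hv]; norm_num
  rw [speedBound.inner_coords] at huv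
  have hc : v 0 = -(u 1 * (u 0 * v 1 - u 1 * v 0)) := by
    linear_combination u 0 * huv - v 0 * hu'
  have he : v 1 = u 0 * (u 0 * v 1 - u 1 * v 0) := by
    linear_combination u 1 * huv - v 1 * hu'
  have hd : (u 0 * v 1 - u 1 * v 0) ^ 2 = 1 := by
    linear_combination (u 0 ^ 2 + u 1 ^ 2) * hv' + hu' - (u 0 * v 0 + u 1 * v 1) * huv
  have h1 : u 0 ^ 2 + v 0 ^ 2 = 1 := by
    linear_combination hu' + u 1 ^ 2 * hd + (v 0 - u 1 * (u 0 * v 1 - u 1 * v 0)) * hc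
  have h2 : u 0 * u 1 + v 0 * v 1 = 0 := by
    linear_combination (-(u 0 * u 1)) * hd + v 1 * hc - u 1 * (u 0 * v 1 - u 1 * v 0) * he
  have h1' : u 1 ^ 2 + v 1 ^ 2 = 1 := by linear_combination hu' + hv' - h1
  ext j
  fin_cases j <;>
    simp only [Fin.mk_zero, Fin.mk_one, PiLp.add_apply, PiLp.smul_apply,
      speedBound.inner_coords, smul_eq_mul]
  · linear_combination (-(z 0)) * h1 - z 1 * h2
  · linear_combination (-(z 1)) * h1' - z 0 * h2

lemma speedBound.parseval_inner (u v x y : EuclideanSpace ℝ (Fin 2)) (hu : ‖u‖ = 1)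
    (hv : ‖v‖ = 1) (huv : ⟪u, v⟫_ℝ = 0) :
    ⟪x, y⟫_ℝ = ⟪x, u⟫_ℝ * ⟪y, u⟫_ℝ + ⟪x, v⟫_ℝ * ⟪y, v⟫_ℝ := by
  conv_lhs => rw [speedBound.ortho_decomp u v x hu hv huv]
  rw [inner_add_left, real_inner_smul_left, real_inner_smul_left]
  have h1 : ⟪u, y⟫_ℝ = ⟪y, u⟫_ℝ := real_inner_comm _ _
  have h2 : ⟪v, y⟫_ℝ = ⟪y, v⟫_ℝ := real_inner_comm _ _
  rw [h1, h2]

lemma speedBound.parseval_norm (u v z : EuclideanSpace ℝ (Fin 2)) (hu : ‖u‖ = 1)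
    (hv : ‖v‖ = 1) (huv : ⟪u, v⟫_ℝ = 0) : ‖z‖ ^ 2 = ⟪z, u⟫_ℝ ^ 2 + ⟪z, v⟫_ℝ ^ 2 := by
  rw [← real_inner_self_eq_norm_sq, speedBound.parseval_inner u v z z hu hv huv]; ring

/-- The purely arithmetic part of the speed bound. -/
lemma speedBound.speed_arith (α b m n k s A B : ℝ) (hαβ : α ^ 2 + b ^ 2 = 1) (hα : 0 ≤ α)
    (hb : 0 ≤ b) (hk : 1 ≤ k) (hm : 0 ≤ m) (hm' : m ≤ k) (hn : 0 ≤ n) (hn' : n ≤ k)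
    (hs : s ^ 2 = 2) (hs1 : 1 ≤ s)
    (hA : |A| ≤ 1 + b * m) (hB : |B| ≤ n + 1 + α * m) :
    A ^ 2 + B ^ 2 ≤ (2 * k + s) ^ 2 := by
  have hα1 : α ≤ 1 := by nlinarith [sq_nonneg b]
  have h2ab : 2 * α + b ≤ 2 * s := by nlinarith [sq_nonneg (2 * b - α), sq_nonneg (2 * α + b)]
  have hbm : 0 ≤ b * m := mul_nonneg hb hm
  have hαm : 0 ≤ α * m := mul_nonneg hα hm
  have hA2 : A ^ 2 ≤ (1 + b * k) ^ 2 := by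
    rw [← sq_abs]
    apply pow_le_pow_left₀ (abs_nonneg _)
    have : b * m ≤ b * k := mul_le_mul_of_nonneg_left hm' hb
    linarith
  have hB2 : B ^ 2 ≤ (k + 1 + α * k) ^ 2 := by
    rw [← sq_abs]
    apply pow_le_pow_left₀ (abs_nonneg _)
    have : α * m ≤ α * k := mul_le_mul_of_nonneg_left hm' hα
    linarith
  have hk0 : (0:ℝ) ≤ k := le_trans zero_le_one hk
  have t2 : 0 ≤ k * (2 * s - 2 * α - b) := mul_nonneg hk0 (by linarith)
  have t3 : 0 ≤ k * ((1 - α) * (k - 1)) :=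
    mul_nonneg hk0 (mul_nonneg (by linarith) (by linarith))
  have e : (2 * k + s) ^ 2 - (1 + b * k) ^ 2 - (k + 1 + α * k) ^ 2 =
      2 * (k * ((1 - α) * (k - 1))) + 2 * (k * (2 * s - 2 * α - b)) +
        (1 - α ^ 2 - b ^ 2) * k ^ 2 + (s ^ 2 - 2) := by ring
  have z1 : (1 - α ^ 2 - b ^ 2) * k ^ 2 = 0 := by
    rw [show (1:ℝ) - α ^ 2 - b ^ 2 = 0 from by linarith]; ring
  linarith

/- The geometric core: the canonical endpoint tracking the minimal diametral point moves
by at most `(2r+1)√2 + 2` between two consecutive configurations. -/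
set_option maxHeartbeats 1000000 in
lemma speedBound.core_bound {ι : Type*} (P Q : ι → EuclideanSpace ℝ (Fin 2))
    (ua va ub vb : EuclideanSpace ℝ (Fin 2)) (ca cb Ea Eb r : ℝ)
    (hua : ‖ua‖ = 1) (hva : ‖va‖ = 1) (hub : ‖ub‖ = 1) (hvb : ‖vb‖ = 1)
    (hoa : ⟪ua, va⟫_ℝ = 0) (hob : ⟪ub, vb⟫_ℝ = 0)
    (hα : 0 ≤ ⟪ub, ua⟫_ℝ)
    (j₀ k₀ : ι)
    (hmina : ∀ j, ⟪P j₀, ua⟫_ℝ ≤ ⟪P j, ua⟫_ℝ)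
    (hminb : ∀ j, ⟪Q k₀, ub⟫_ℝ ≤ ⟪Q j, ub⟫_ℝ)
    (hmove : ∀ j, ‖Q j - P j‖ ≤ 1)
    (hEa : ∀ j, |⟪P j, va⟫_ℝ - ca| ≤ Ea / 2)
    (hEb : ∀ j, |⟪Q j, vb⟫_ℝ - cb| ≤ Eb / 2)
    (hr : 0 ≤ r) (hEa' : Ea ≤ 2 * Real.sqrt 2 * r + 2) (hEb' : Eb ≤ 2 * Real.sqrt 2 * r + 2) :
    ‖(Q k₀ + (cb - ⟪Q k₀, vb⟫_ℝ) • vb) - (P j₀ + (ca - ⟪P j₀, va⟫_ℝ) • va)‖ ≤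
      (2 * r + 1) * Real.sqrt 2 + 2 := by
  have hs2 : Real.sqrt 2 ^ 2 = 2 := Real.sq_sqrt (by norm_num)
  have hs1 : 1 ≤ Real.sqrt 2 := by nlinarith [Real.sqrt_nonneg 2]
  have hub1 : ⟪ub, ub⟫_ℝ = 1 := by rw [real_inner_self_eq_norm_sq, hub]; norm_num
  have hvb1 : ⟪vb, vb⟫_ℝ = 1 := by rw [real_inner_self_eq_norm_sq, hvb]; norm_num
  -- frame-change coefficients
  have hαβ : ⟪ub, ua⟫_ℝ ^ 2 + ⟪ub, va⟫_ℝ ^ 2 = 1 := by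
    have h := speedBound.parseval_norm ua va ub hua hva hoa
    rw [hub] at h; nlinarith [h]
  have hγδ : ⟪vb, ua⟫_ℝ ^ 2 + ⟪vb, va⟫_ℝ ^ 2 = 1 := by
    have h := speedBound.parseval_norm ua va vb hua hva hoa
    rw [hvb] at h; nlinarith [h]
  have hcross : ⟪ub, ua⟫_ℝ * ⟪vb, ua⟫_ℝ + ⟪ub, va⟫_ℝ * ⟪vb, va⟫_ℝ = 0 := by
    have h := speedBound.parseval_inner ua va ub vb hua hva hoa
    rw [hob] at h; linarith [h]
  have hδα : ⟪vb, va⟫_ℝ ^ 2 = ⟪ub, ua⟫_ℝ ^ 2 := by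
    have e : (⟪ub, ua⟫_ℝ * ⟪vb, ua⟫_ℝ) ^ 2 = (⟪ub, va⟫_ℝ * ⟪vb, va⟫_ℝ) ^ 2 := by
      have h' : ⟪ub, ua⟫_ℝ * ⟪vb, ua⟫_ℝ = -(⟪ub, va⟫_ℝ * ⟪vb, va⟫_ℝ) := by linarith
      rw [h']; ring
    linear_combination (-1 : ℝ) * e + ⟪ub, ua⟫_ℝ ^ 2 * hγδ - ⟪vb, va⟫_ℝ ^ 2 * hαβ
  have hδa : |⟪vb, va⟫_ℝ| = ⟪ub, ua⟫_ℝ := by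
    rw [← abs_of_nonneg hα, ← Real.sqrt_sq_eq_abs, ← Real.sqrt_sq_eq_abs, hδα]
  -- movement bound in any unit direction
  have hmv : ∀ j (w : EuclideanSpace ℝ (Fin 2)), ‖w‖ = 1 →
      |⟪Q j, w⟫_ℝ - ⟪P j, w⟫_ℝ| ≤ 1 := by
    intro j w hw
    have h1 : ⟪Q j, w⟫_ℝ - ⟪P j, w⟫_ℝ = ⟪Q j - P j, w⟫_ℝ := by rw [inner_sub_left]
    rw [h1]
    calc |⟪Q j - P j, w⟫_ℝ| ≤ ‖Q j - P j‖ * ‖w‖ := abs_real_inner_le_norm _ _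
      _ ≤ 1 := by rw [hw]; simpa using hmove j
  have hta' : |ca - ⟪P j₀, va⟫_ℝ| ≤ Ea / 2 := by rw [abs_sub_comm]; exact hEa j₀
  have hEa2 : (0:ℝ) ≤ Ea / 2 := le_trans (abs_nonneg _) (hEa j₀)
  have hEb2 : (0:ℝ) ≤ Eb / 2 := le_trans (abs_nonneg _) (hEb j₀)
  have hβn : (0:ℝ) ≤ |⟪ub, va⟫_ℝ| := abs_nonneg _
  -- component of the displacement along ub
  have hzu : ⟪(Q k₀ + (cb - ⟪Q k₀, vb⟫_ℝ) • vb) - (P j₀ + (ca - ⟪P j₀, va⟫_ℝ) • va), ub⟫_ℝ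
      = ⟪Q k₀, ub⟫_ℝ - ⟪P j₀, ub⟫_ℝ - (ca - ⟪P j₀, va⟫_ℝ) * ⟪ub, va⟫_ℝ := by
    have hob' : ⟪vb, ub⟫_ℝ = 0 := by rw [real_inner_comm]; exact hob
    have hc1 : ⟪va, ub⟫_ℝ = ⟪ub, va⟫_ℝ := real_inner_comm _ _
    rw [inner_sub_left, inner_add_left, inner_add_left, real_inner_smul_left,
      real_inner_smul_left, hob', hc1]
    ring
  have hzv : ⟪(Q k₀ + (cb - ⟪Q k₀, vb⟫_ℝ) • vb) - (P j₀ + (ca - ⟪P j₀, va⟫_ℝ) • va), vb⟫_ℝ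
      = cb - ⟪P j₀, vb⟫_ℝ - (ca - ⟪P j₀, va⟫_ℝ) * ⟪vb, va⟫_ℝ := by
    have hc2 : ⟪va, vb⟫_ℝ = ⟪vb, va⟫_ℝ := real_inner_comm _ _
    rw [inner_sub_left, inner_add_left, inner_add_left, real_inner_smul_left,
      real_inner_smul_left, hvb1, hc2]
    ring
  have hA : |⟪(Q k₀ + (cb - ⟪Q k₀, vb⟫_ℝ) • vb) - (P j₀ + (ca - ⟪P j₀, va⟫_ℝ) • va), ub⟫_ℝ|
      ≤ 1 + |⟪ub, va⟫_ℝ| * (Ea / 2) := by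
    rw [hzu, abs_le]
    have htb : |(ca - ⟪P j₀, va⟫_ℝ) * ⟪ub, va⟫_ℝ| ≤ (Ea / 2) * |⟪ub, va⟫_ℝ| := by
      rw [abs_mul]; exact mul_le_mul_of_nonneg_right hta' hβn
    rw [abs_le] at htb
    constructor
    · have e1 := (abs_le.1 (hmv k₀ ub hub)).1
      have e2 : ⟪P k₀, ub⟫_ℝ = ⟪P k₀, ua⟫_ℝ * ⟪ub, ua⟫_ℝ + ⟪P k₀, va⟫_ℝ * ⟪ub, va⟫_ℝ :=
        speedBound.parseval_inner ua va (P k₀) ub hua hva hoa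
      have e3 : ⟪P j₀, ub⟫_ℝ = ⟪P j₀, ua⟫_ℝ * ⟪ub, ua⟫_ℝ + ⟪P j₀, va⟫_ℝ * ⟪ub, va⟫_ℝ :=
        speedBound.parseval_inner ua va (P j₀) ub hua hva hoa
      have e4 : ⟪P j₀, ua⟫_ℝ * ⟪ub, ua⟫_ℝ ≤ ⟪P k₀, ua⟫_ℝ * ⟪ub, ua⟫_ℝ :=
        mul_le_mul_of_nonneg_right (hmina k₀) hα
      have e5 : |(⟪P k₀, va⟫_ℝ - ca) * ⟪ub, va⟫_ℝ| ≤ (Ea / 2) * |⟪ub, va⟫_ℝ| := by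
        rw [abs_mul]; exact mul_le_mul_of_nonneg_right (hEa k₀) hβn
      rw [abs_le] at e5
      linarith [e1, e2, e3, e4, e5.1, htb.1, htb.2]
    · have e1 : ⟪Q k₀, ub⟫_ℝ ≤ ⟪Q j₀, ub⟫_ℝ := hminb j₀
      have e2 := (abs_le.1 (hmv j₀ ub hub)).2
      linarith [htb.1, htb.2]
  have hB : |⟪(Q k₀ + (cb - ⟪Q k₀, vb⟫_ℝ) • vb) - (P j₀ + (ca - ⟪P j₀, va⟫_ℝ) • va), vb⟫_ℝ|
      ≤ Eb / 2 + 1 + ⟪ub, ua⟫_ℝ * (Ea / 2) := by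
    rw [hzv]
    have e1 : |cb - ⟪Q j₀, vb⟫_ℝ| ≤ Eb / 2 := by rw [abs_sub_comm]; exact hEb j₀
    have e2 := hmv j₀ vb hvb
    have e3 : |(ca - ⟪P j₀, va⟫_ℝ) * ⟪vb, va⟫_ℝ| ≤ ⟪ub, ua⟫_ℝ * (Ea / 2) := by
      rw [abs_mul, hδa]
      calc |ca - ⟪P j₀, va⟫_ℝ| * ⟪ub, ua⟫_ℝ ≤ (Ea / 2) * ⟪ub, ua⟫_ℝ :=
            mul_le_mul_of_nonneg_right hta' hα
        _ = ⟪ub, ua⟫_ℝ * (Ea / 2) := by ring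
    rw [abs_le] at e1 e2 e3 ⊢
    constructor <;> linarith [e1.1, e1.2, e2.1, e2.2, e3.1, e3.2]
  -- assemble
  have hk1 : 1 ≤ Real.sqrt 2 * r + 1 := by nlinarith [Real.sqrt_nonneg 2]
  have hsq : ‖(Q k₀ + (cb - ⟪Q k₀, vb⟫_ℝ) • vb) - (P j₀ + (ca - ⟪P j₀, va⟫_ℝ) • va)‖ ^ 2
      ≤ (2 * (Real.sqrt 2 * r + 1) + Real.sqrt 2) ^ 2 := by
    rw [speedBound.parseval_norm ub vb _ hub hvb hob]
    have hA' : |⟪(Q k₀ + (cb - ⟪Q k₀, vb⟫_ℝ) • vb) - (P j₀ + (ca - ⟪P j₀, va⟫_ℝ) • va), ub⟫_ℝ|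
        ≤ 1 + |⟪ub, va⟫_ℝ| * (Ea / 2) := hA
    exact speedBound.speed_arith ⟪ub, ua⟫_ℝ |⟪ub, va⟫_ℝ| (Ea / 2) (Eb / 2)
      (Real.sqrt 2 * r + 1) (Real.sqrt 2) _ _ (by rw [sq_abs]; exact hαβ) hα hβn hk1 hEa2
      (by linarith) hEb2 (by linarith) hs2 hs1 hA' hB
  calc ‖(Q k₀ + (cb - ⟪Q k₀, vb⟫_ℝ) • vb) - (P j₀ + (ca - ⟪P j₀, va⟫_ℝ) • va)‖
      = Real.sqrt (‖(Q k₀ + (cb - ⟪Q k₀, vb⟫_ℝ) • vb) -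
          (P j₀ + (ca - ⟪P j₀, va⟫_ℝ) • va)‖ ^ 2) := by
        rw [Real.sqrt_sq (norm_nonneg _)]
    _ ≤ Real.sqrt ((2 * (Real.sqrt 2 * r + 1) + Real.sqrt 2) ^ 2) := Real.sqrt_le_sqrt hsq
    _ = 2 * (Real.sqrt 2 * r + 1) + Real.sqrt 2 :=
        Real.sqrt_sq (by nlinarith [Real.sqrt_nonneg 2])
    _ = (2 * r + 1) * Real.sqrt 2 + 2 := by ring

/-- **speed-bound.** For unit-speed trajectories with small extent at the
integer times `i` and `i+1`, and consistently labeled diametral pairs, the canonical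
endpoints move by at most `(2r+1)·√2 + 2` between times `i` and `i+1`; consequently, the
linearly interpolated endpoints move with speed at most `(2r+1)·√2 + 2` on `[i+1, i+2]`. -/
theorem speed_bound {ι : Type*} [Fintype ι] [Nonempty ι]
    (p : ι → ℝ → EuclideanSpace ℝ (Fin 2))
    (hp : ∀ j, LipschitzWith 1 (p j))
    (r : ℝ) (hr : 0 ≤ r) (i : ℤ)
    (d₁ d₂ v q₁' q₂' : ℝ → EuclideanSpace ℝ (Fin 2)) (c : ℝ → ℝ)
    (hd₁ : ∀ s ∈ ({(i : ℝ), (i : ℝ) + 1} : Set ℝ), ∃ j, d₁ s = p j s)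
    (hd₂ : ∀ s ∈ ({(i : ℝ), (i : ℝ) + 1} : Set ℝ), ∃ j, d₂ s = p j s)
    (hne : ∀ s ∈ ({(i : ℝ), (i : ℝ) + 1} : Set ℝ), d₁ s ≠ d₂ s)
    (hdiam : ∀ s ∈ ({(i : ℝ), (i : ℝ) + 1} : Set ℝ),
      dist (d₁ s) (d₂ s) = configDiam (fun j => p j s))
    (hlabel : ⟪d₂ (i : ℝ) - d₁ (i : ℝ), d₂ ((i : ℝ) + 1) - d₁ ((i : ℝ) + 1)⟫_ℝ ≥ 0)
    (hv : ∀ s ∈ ({(i : ℝ), (i : ℝ) + 1} : Set ℝ), ‖v s‖ = 1)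
    (hperp : ∀ s ∈ ({(i : ℝ), (i : ℝ) + 1} : Set ℝ), ⟪d₂ s - d₁ s, v s⟫_ℝ = 0)
    (hc : ∀ s ∈ ({(i : ℝ), (i : ℝ) + 1} : Set ℝ),
      c s = ((Finset.univ.inf' Finset.univ_nonempty fun j => ⟪p j s, v s⟫_ℝ) +
        (Finset.univ.sup' Finset.univ_nonempty fun j => ⟪p j s, v s⟫_ℝ)) / 2)
    (hq₁' : ∀ s ∈ ({(i : ℝ), (i : ℝ) + 1} : Set ℝ),
      q₁' s = d₁ s + (c s - ⟪d₁ s, v s⟫_ℝ) • v s)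
    (hq₂' : ∀ s ∈ ({(i : ℝ), (i : ℝ) + 1} : Set ℝ),
      q₂' s = d₂ s + (c s - ⟪d₂ s, v s⟫_ℝ) • v s)
    (hEi : configExtent (fun j => p j (i : ℝ)) (v (i : ℝ)) ≤ 2 * Real.sqrt 2 * r + 2)
    (hEi1 : configExtent (fun j => p j ((i : ℝ) + 1)) (v ((i : ℝ) + 1)) ≤
      2 * Real.sqrt 2 * r + 2) :
    (dist (q₁' (i : ℝ)) (q₁' ((i : ℝ) + 1)) ≤ (2 * r + 1) * Real.sqrt 2 + 2 ∧
      dist (q₂' (i : ℝ)) (q₂' ((i : ℝ) + 1)) ≤ (2 * r + 1) * Real.sqrt 2 + 2) ∧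
    ∀ q' : ℝ → EuclideanSpace ℝ (Fin 2), (q' = q₁' ∨ q' = q₂') →
      ∀ t ∈ Set.Icc ((i : ℝ) + 1) ((i : ℝ) + 2), ∀ t' ∈ Set.Icc ((i : ℝ) + 1) ((i : ℝ) + 2),
        dist ((1 - (t - ((i : ℝ) + 1))) • q' (i : ℝ) + (t - ((i : ℝ) + 1)) • q' ((i : ℝ) + 1))
          ((1 - (t' - ((i : ℝ) + 1))) • q' (i : ℝ) + (t' - ((i : ℝ) + 1)) • q' ((i : ℝ) + 1))
          ≤ ((2 * r + 1) * Real.sqrt 2 + 2) * |t - t'| := by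
  have ha : (i : ℝ) ∈ ({(i : ℝ), (i : ℝ) + 1} : Set ℝ) := Set.mem_insert _ _
  have hb : (i : ℝ) + 1 ∈ ({(i : ℝ), (i : ℝ) + 1} : Set ℝ) :=
    Set.mem_insert_of_mem _ rfl
  -- the unit diametral direction
  set U : ℝ → EuclideanSpace ℝ (Fin 2) :=
    fun s => ‖d₂ s - d₁ s‖⁻¹ • (d₂ s - d₁ s) with hU
  have hwne : ∀ s ∈ ({(i : ℝ), (i : ℝ) + 1} : Set ℝ), d₂ s - d₁ s ≠ 0 := fun s hs =>
    sub_ne_zero.2 (Ne.symm (hne s hs))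
  have hUnorm : ∀ s ∈ ({(i : ℝ), (i : ℝ) + 1} : Set ℝ), ‖U s‖ = 1 := by
    intro s hs
    rw [hU]
    rw [norm_smul, Real.norm_eq_abs, abs_inv, abs_norm,
      inv_mul_cancel₀ (norm_ne_zero_iff.2 (hwne s hs))]
  have hUorth : ∀ s ∈ ({(i : ℝ), (i : ℝ) + 1} : Set ℝ), ⟪U s, v s⟫_ℝ = 0 := by
    intro s hs
    rw [hU]
    rw [real_inner_smul_left, hperp s hs, mul_zero]
  -- min/max property of the diametral endpoints
  have hminmax : ∀ s ∈ ({(i : ℝ), (i : ℝ) + 1} : Set ℝ), ∀ j,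
      ⟪d₁ s, U s⟫_ℝ ≤ ⟪p j s, U s⟫_ℝ ∧ ⟪p j s, U s⟫_ℝ ≤ ⟪d₂ s, U s⟫_ℝ := by
    intro s hs j
    obtain ⟨j1, hj1⟩ := hd₁ s hs
    obtain ⟨j2, hj2⟩ := hd₂ s hs
    have hDpos : (0:ℝ) < ‖d₂ s - d₁ s‖ := norm_pos_iff.2 (hwne s hs)
    have hcd : ∀ k l : ι, dist (p k s) (p l s) ≤ ‖d₂ s - d₁ s‖ := by
      intro k l
      calc dist (p k s) (p l s)
          ≤ configDiam (fun j => p j s) :=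
            Finset.le_sup' (fun jk : ι × ι => dist (p jk.1 s) (p jk.2 s))
              (Finset.mem_univ (k, l))
        _ = dist (d₁ s) (d₂ s) := (hdiam s hs).symm
        _ = ‖d₂ s - d₁ s‖ := by rw [dist_eq_norm, norm_sub_rev]
    have hself : ⟪d₂ s - d₁ s, d₂ s - d₁ s⟫_ℝ = ‖d₂ s - d₁ s‖ * ‖d₂ s - d₁ s‖ :=
      real_inner_self_eq_norm_mul_norm _
    rw [inner_sub_left] at hself
    have hmin : ⟪d₁ s, d₂ s - d₁ s⟫_ℝ ≤ ⟪p j s, d₂ s - d₁ s⟫_ℝ := by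
      have h1 : ⟪d₂ s - p j s, d₂ s - d₁ s⟫_ℝ ≤ ‖d₂ s - d₁ s‖ * ‖d₂ s - d₁ s‖ := by
        calc ⟪d₂ s - p j s, d₂ s - d₁ s⟫_ℝ ≤ ‖d₂ s - p j s‖ * ‖d₂ s - d₁ s‖ :=
              real_inner_le_norm _ _
          _ ≤ ‖d₂ s - d₁ s‖ * ‖d₂ s - d₁ s‖ := by
              apply mul_le_mul_of_nonneg_right _ (norm_nonneg _)
              calc ‖d₂ s - p j s‖ = dist (d₂ s) (p j s) := (dist_eq_norm _ _).symm
                _ = dist (p j2 s) (p j s) := by rw [hj2]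
                _ ≤ ‖d₂ s - d₁ s‖ := hcd j2 j
      rw [inner_sub_left] at h1
      linarith
    have hmax : ⟪p j s, d₂ s - d₁ s⟫_ℝ ≤ ⟪d₂ s, d₂ s - d₁ s⟫_ℝ := by
      have h1 : ⟪p j s - d₁ s, d₂ s - d₁ s⟫_ℝ ≤ ‖d₂ s - d₁ s‖ * ‖d₂ s - d₁ s‖ := by
        calc ⟪p j s - d₁ s, d₂ s - d₁ s⟫_ℝ ≤ ‖p j s - d₁ s‖ * ‖d₂ s - d₁ s‖ :=
              real_inner_le_norm _ _
          _ ≤ ‖d₂ s - d₁ s‖ * ‖d₂ s - d₁ s‖ := by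
              apply mul_le_mul_of_nonneg_right _ (norm_nonneg _)
              calc ‖p j s - d₁ s‖ = dist (p j s) (d₁ s) := (dist_eq_norm _ _).symm
                _ = dist (p j s) (p j1 s) := by rw [hj1]
                _ ≤ ‖d₂ s - d₁ s‖ := hcd j j1
      rw [inner_sub_left] at h1
      linarith
    have hscale : ∀ x : EuclideanSpace ℝ (Fin 2),
        ⟪x, U s⟫_ℝ = ‖d₂ s - d₁ s‖⁻¹ * ⟪x, d₂ s - d₁ s⟫_ℝ := by
      intro x; rw [hU]; rw [real_inner_smul_right]
    constructor
    · rw [hscale, hscale]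
      exact mul_le_mul_of_nonneg_left hmin (by positivity)
    · rw [hscale, hscale]
      exact mul_le_mul_of_nonneg_left hmax (by positivity)
  -- extent property
  have hext : ∀ s ∈ ({(i : ℝ), (i : ℝ) + 1} : Set ℝ), ∀ j,
      |⟪p j s, v s⟫_ℝ - c s| ≤ configExtent (fun j => p j s) (v s) / 2 := by
    intro s hs j
    have h1 : (Finset.univ.inf' Finset.univ_nonempty fun j => ⟪p j s, v s⟫_ℝ) ≤
        ⟪p j s, v s⟫_ℝ :=
      Finset.inf'_le (fun j => ⟪p j s, v s⟫_ℝ) (Finset.mem_univ j)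
    have h2 : ⟪p j s, v s⟫_ℝ ≤
        Finset.univ.sup' Finset.univ_nonempty fun j => ⟪p j s, v s⟫_ℝ :=
      Finset.le_sup' (fun j => ⟪p j s, v s⟫_ℝ) (Finset.mem_univ j)
    rw [hc s hs, configExtent, abs_le]
    constructor <;> linarith
  -- movement
  have hmove : ∀ j, ‖p j ((i : ℝ) + 1) - p j (i : ℝ)‖ ≤ 1 := by
    intro j
    have h1 := (hp j).dist_le_mul ((i : ℝ) + 1) (i : ℝ)
    rw [← dist_eq_norm]
    have h2 : dist ((i : ℝ) + 1) (i : ℝ) = 1 := by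
      rw [Real.dist_eq]; norm_num
    rw [h2] at h1
    simpa using h1
  -- sign of the frame change
  have hUpos : 0 ≤ ⟪U ((i : ℝ) + 1), U (i : ℝ)⟫_ℝ := by
    rw [hU]
    rw [real_inner_smul_left, real_inner_smul_right]
    have := real_inner_comm (d₂ ((i : ℝ) + 1) - d₁ ((i : ℝ) + 1)) (d₂ (i : ℝ) - d₁ (i : ℝ))
    apply mul_nonneg (by positivity)
    apply mul_nonneg (by positivity)
    rw [← this]; exact hlabel
  obtain ⟨ja1, hja1⟩ := hd₁ (i : ℝ) ha
  obtain ⟨jb1, hjb1⟩ := hd₁ ((i : ℝ) + 1) hb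
  obtain ⟨ja2, hja2⟩ := hd₂ (i : ℝ) ha
  obtain ⟨jb2, hjb2⟩ := hd₂ ((i : ℝ) + 1) hb
  -- first endpoint
  have key1 : dist (q₁' (i : ℝ)) (q₁' ((i : ℝ) + 1)) ≤ (2 * r + 1) * Real.sqrt 2 + 2 := by
    have hcore := speedBound.core_bound (fun j => p j (i : ℝ)) (fun j => p j ((i : ℝ) + 1))
      (U (i : ℝ)) (v (i : ℝ)) (U ((i : ℝ) + 1)) (v ((i : ℝ) + 1)) (c (i : ℝ)) (c ((i : ℝ) + 1))
      (configExtent (fun j => p j (i : ℝ)) (v (i : ℝ)))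
      (configExtent (fun j => p j ((i : ℝ) + 1)) (v ((i : ℝ) + 1))) r
      (hUnorm _ ha) (hv _ ha) (hUnorm _ hb) (hv _ hb) (hUorth _ ha) (hUorth _ hb)
      hUpos ja1 jb1
      (fun j => by have := (hminmax _ ha j).1; rwa [hja1] at this)
      (fun j => by have := (hminmax _ hb j).1; rwa [hjb1] at this)
      hmove (hext _ ha) (hext _ hb) hr hEi hEi1
    rw [hq₁' _ ha, hq₁' _ hb, hja1, hjb1, dist_eq_norm, ← norm_sub_rev]
    exact hcore
  -- second endpoint
  have key2 : dist (q₂' (i : ℝ)) (q₂' ((i : ℝ) + 1)) ≤ (2 * r + 1) * Real.sqrt 2 + 2 := by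
    have hna : ‖-U (i : ℝ)‖ = 1 := by rw [norm_neg]; exact hUnorm _ ha
    have hnb : ‖-U ((i : ℝ) + 1)‖ = 1 := by rw [norm_neg]; exact hUnorm _ hb
    have hoa : ⟪-U (i : ℝ), v (i : ℝ)⟫_ℝ = 0 := by
      rw [inner_neg_left, hUorth _ ha, neg_zero]
    have hob : ⟪-U ((i : ℝ) + 1), v ((i : ℝ) + 1)⟫_ℝ = 0 := by
      rw [inner_neg_left, hUorth _ hb, neg_zero]
    have hpos : 0 ≤ ⟪-U ((i : ℝ) + 1), -U (i : ℝ)⟫_ℝ := by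
      rw [inner_neg_left, inner_neg_right, neg_neg]; exact hUpos
    have hcore := speedBound.core_bound (fun j => p j (i : ℝ)) (fun j => p j ((i : ℝ) + 1))
      (-U (i : ℝ)) (v (i : ℝ)) (-U ((i : ℝ) + 1)) (v ((i : ℝ) + 1)) (c (i : ℝ)) (c ((i : ℝ) + 1))
      (configExtent (fun j => p j (i : ℝ)) (v (i : ℝ)))
      (configExtent (fun j => p j ((i : ℝ) + 1)) (v ((i : ℝ) + 1))) r
      hna (hv _ ha) hnb (hv _ hb) hoa hob hpos ja2 jb2
      (fun j => by
        have := (hminmax _ ha j).2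
        rw [hja2] at this
        rw [inner_neg_right, inner_neg_right]
        exact neg_le_neg this)
      (fun j => by
        have := (hminmax _ hb j).2
        rw [hjb2] at this
        rw [inner_neg_right, inner_neg_right]
        exact neg_le_neg this)
      hmove (hext _ ha) (hext _ hb) hr hEi hEi1
    rw [hq₂' _ ha, hq₂' _ hb, hja2, hjb2, dist_eq_norm, ← norm_sub_rev]
    exact hcore
  refine ⟨⟨key1, key2⟩, ?_⟩
  intro q' hq' t ht t' ht'
  have hT : (0:ℝ) ≤ (2 * r + 1) * Real.sqrt 2 + 2 := by nlinarith [Real.sqrt_nonneg 2]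
  have hdist : dist (q' (i : ℝ)) (q' ((i : ℝ) + 1)) ≤ (2 * r + 1) * Real.sqrt 2 + 2 := by
    rcases hq' with rfl | rfl
    · exact key1
    · exact key2
  have hsub : (1 - (t - ((i : ℝ) + 1))) • q' (i : ℝ) + (t - ((i : ℝ) + 1)) • q' ((i : ℝ) + 1)
      - ((1 - (t' - ((i : ℝ) + 1))) • q' (i : ℝ) + (t' - ((i : ℝ) + 1)) • q' ((i : ℝ) + 1))
      = (t - t') • (q' ((i : ℝ) + 1) - q' (i : ℝ)) := by
    module
  rw [dist_eq_norm, hsub, norm_smul, Real.norm_eq_abs]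
  have h1 : ‖q' ((i : ℝ) + 1) - q' (i : ℝ)‖ = dist (q' (i : ℝ)) (q' ((i : ℝ) + 1)) := by
    rw [dist_eq_norm, norm_sub_rev]
  rw [h1, mul_comm]
  exact mul_le_mul_of_nonneg_right hdist (abs_nonneg _)
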